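/- arXiv:2305.15863 — 3 statements merged into one kernel-verified Lean document; each statement's English description precedes it below -/
import Mathlib

section
/- Let M > 0, μ ∈ (0, M], c ≥ 1, and let k be a positive integer. Let N be a positive integer and X_1, ..., X_N independent random variables, each taking values in [0, M] almost surely and each satisfying E[X_j] ≥ μ. Then E[(Σ_{j=1}^N X_j + c)^{−k}] ≤ 2·exp(−N·μ² / (2·M²)) + 2^k / (N·μ)^k. -/
/-!
Split along the event `A = {∑ j, X j ≤ N μ / 2}`. Since `c ≥ 1` the integrand is at most `1`
everywhere, and off `A` it is at most `(N μ / 2)⁻ᵏ = 2ᵏ / (N μ)ᵏ`. As `∑ j, 𝔼[X j] ≥ N μ`, the event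
`A` is a lower deviation of the sum by at least `N μ / 2`, so Hoeffding's inequality bounds its
probability by `exp (-N μ² / (2 M²))`.
-/

open MeasureTheory ProbabilityTheory

namespace ProbabilityTheory

variable {Ω : Type*} [MeasurableSpace Ω] {P : Measure Ω}

theorem measureReal_sum_le_sum_integral_sub_le_of_mem_Icc [IsProbabilityMeasure P]
    {ι : Type*} [Fintype ι] {X : ι → Ω → ℝ} (hindep : iIndepFun X P)
    (hmeas : ∀ i, AEMeasurable (X i) P) {a b : ℝ}
    (hX : ∀ i, ∀ᵐ ω ∂P, X i ω ∈ Set.Icc a b) {ε : ℝ} (hε : 0 ≤ ε) :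
    P.real {ω | ∑ i, X i ω ≤ ∑ i, P[X i] - ε}
      ≤ Real.exp (-2 * ε ^ 2 / (Fintype.card ι * (b - a) ^ 2)) := by
  have hsubG : ∀ i ∈ Finset.univ,
      HasSubgaussianMGF (fun ω ↦ P[X i] - X i ω) ((‖b - a‖₊ / 2) ^ 2) P :=
    fun i _ ↦ (hasSubgaussianMGF_of_mem_Icc (hmeas i) (hX i)).neg.congr
      (ae_of_all _ fun ω ↦ by simp)
  have hindep' : iIndepFun (fun i ω ↦ P[X i] - X i ω) P :=
    hindep.comp (fun i (x : ℝ) ↦ ∫ ω, X i ω ∂P - x) fun _ ↦ by fun_prop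
  calc P.real {ω | ∑ i, X i ω ≤ ∑ i, P[X i] - ε}
      = P.real {ω | ε ≤ ∑ i, (P[X i] - X i ω)} := by
        simp only [Finset.sum_sub_distrib]
        congr with ω
        constructor <;> intro h <;> linarith
    _ ≤ Real.exp (-ε ^ 2 / (2 * ∑ _i : ι, ((‖b - a‖₊ / 2) ^ 2 : NNReal))) :=
        HasSubgaussianMGF.measure_sum_ge_le_of_iIndepFun hindep' hsubG hε
    _ = Real.exp (-2 * ε ^ 2 / (Fintype.card ι * (b - a) ^ 2)) := by
        congr 1
        push_cast
        simp only [Finset.sum_const, Finset.card_univ, nsmul_eq_mul, Real.norm_eq_abs, div_pow,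
          sq_abs]
        rw [show 2 * (Fintype.card ι * ((b - a) ^ 2 / 2 ^ 2)) = Fintype.card ι * (b - a) ^ 2 / 2 by
          ring, div_div_eq_mul_div]
        ring

theorem integral_le_measureReal_add [IsProbabilityMeasure P] {f : Ω → ℝ} {A : Set Ω}
    (hA : MeasurableSet A) {δ : ℝ} (hδ : 0 ≤ δ) (hf_nonneg : ∀ᵐ ω ∂P, 0 ≤ f ω)
    (hf_le_one : ∀ᵐ ω ∂P, f ω ≤ 1) (hf_compl : ∀ᵐ ω ∂P, ω ∉ A → f ω ≤ δ) :
    ∫ ω, f ω ∂P ≤ P.real A + δ := by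
  have hA_int : Integrable (A.indicator (1 : Ω → ℝ)) P := (integrable_const 1).indicator hA
  have hg_int : Integrable (fun ω ↦ A.indicator 1 ω + δ) P := hA_int.add (integrable_const δ)
  have hf_le : ∀ᵐ ω ∂P, f ω ≤ A.indicator 1 ω + δ := by
    filter_upwards [hf_le_one, hf_compl] with ω h1 hf_off
    by_cases hω : ω ∈ A
    · simp only [Set.indicator_of_mem hω, Pi.one_apply]; linarith
    · simpa [Set.indicator_of_notMem hω] using hf_off hω
  calc ∫ ω, f ω ∂P ≤ ∫ ω, (A.indicator 1 ω + δ) ∂P :=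
        integral_mono_of_nonneg hf_nonneg hg_int hf_le
    _ = P.real A + δ := by
        rw [integral_add hA_int (integrable_const δ),
          integral_indicator_one hA, integral_const, probReal_univ, one_smul]

end ProbabilityTheory

theorem negative_moment_upper_bound_general
    {Ω : Type} [MeasurableSpace Ω] (P : Measure Ω) [IsProbabilityMeasure P]
    (M μ c : ℝ) (hμ : 0 < μ) (hc : 1 ≤ c)
    (k : ℕ)
    (N : ℕ) (hN : 0 < N)
    (X : Fin N → Ω → ℝ)
    (hXmeas : ∀ j, Measurable (X j))
    (hindep : iIndepFun X P)
    (hXrange : ∀ j, ∀ᵐ ω ∂P, X j ω ∈ Set.Icc 0 M)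
    (hXmean : ∀ j, μ ≤ ∫ ω, X j ω ∂P) :
    ∫ ω, ((∑ j, X j ω + c) ^ k)⁻¹ ∂P
      ≤ 2 * Real.exp (-(N * μ ^ 2) / (2 * M ^ 2)) + 2 ^ k / (N * μ) ^ k := by
  set A := {ω | ∑ j, X j ω ≤ N * μ / 2}
  have hNμ : 0 < N * μ / 2 := by positivity
  have htail : P.real A ≤ Real.exp (-(N * μ ^ 2) / (2 * M ^ 2)) := by
    have hmean : N * μ ≤ ∑ j, P[X j] := by
      simpa using Finset.sum_le_sum fun j (_ : j ∈ Finset.univ) ↦ hXmean j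
    calc P.real A ≤ P.real {ω | ∑ j, X j ω ≤ ∑ j, P[X j] - N * μ / 2} :=
          measureReal_mono (Set.ofPred_subset_ofPred.2 fun ω hω ↦ by linarith)
      _ ≤ Real.exp (-2 * (N * μ / 2) ^ 2 / (Fintype.card (Fin N) * (M - 0) ^ 2)) :=
          measureReal_sum_le_sum_integral_sub_le_of_mem_Icc hindep
            (fun j ↦ (hXmeas j).aemeasurable) hXrange hNμ.le
      _ = Real.exp (-(N * μ ^ 2) / (2 * M ^ 2)) := by
          congr 1
          rw [Fintype.card_fin, sub_zero]
          field_simp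
  have hsum_nonneg : ∀ᵐ ω ∂P, 0 ≤ ∑ j, X j ω := by
    filter_upwards [ae_all_iff.2 hXrange] with ω hω
    exact Finset.sum_nonneg fun j _ ↦ (hω j).1
  calc ∫ ω, ((∑ j, X j ω + c) ^ k)⁻¹ ∂P ≤ P.real A + 2 ^ k / (N * μ) ^ k := by
        refine integral_le_measureReal_add
          (measurableSet_le (Finset.measurable_sum _ fun j _ ↦ hXmeas j) measurable_const)
          (by positivity) ?_ ?_ ?_ <;> filter_upwards [hsum_nonneg] with ω hω
        · have : 0 < ∑ j, X j ω + c := by linarith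
          positivity
        · exact inv_le_one_of_one_le₀ (one_le_pow₀ (by linarith))
        · intro hωA
          rw [← inv_div, ← div_pow]
          exact inv_anti₀ (by positivity) (pow_le_pow_left₀ hNμ.le (by linarith [not_le.1 hωA]) k)
    _ ≤ 2 * Real.exp (-(N * μ ^ 2) / (2 * M ^ 2)) + 2 ^ k / (N * μ) ^ k := by
        linarith [Real.exp_pos (-(N * μ ^ 2) / (2 * M ^ 2))]

/-- Chernoff-type moment bound, explicit form: For independent random
variables `X_1, …, X_N` with values in `[0, M]` a.s. and means at least `μ ∈ (0, M]`,
and `c ≥ 1`, `k ≥ 1`,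
`E[(Σ_j X_j + c)^{-k}] ≤ 2 exp(- N μ² / (2 M²)) + 2^k / (N μ)^k`. -/
theorem negative_moment_upper_bound
    {Ω : Type} [MeasurableSpace Ω] (P : Measure Ω) [IsProbabilityMeasure P]
    (M μ c : ℝ) (hM : 0 < M) (hμ : 0 < μ) (hμM : μ ≤ M) (hc : 1 ≤ c)
    (k : ℕ) (hk : 0 < k)
    (N : ℕ) (hN : 0 < N)
    (X : Fin N → Ω → ℝ)
    (hXmeas : ∀ j, Measurable (X j))
    (hindep : iIndepFun X P)
    (hXrange : ∀ j, ∀ᵐ ω ∂P, X j ω ∈ Set.Icc 0 M)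
    (hXmean : ∀ j, μ ≤ ∫ ω, X j ω ∂P) :
    ∫ ω, ((∑ j, X j ω + c) ^ k)⁻¹ ∂P
      ≤ 2 * Real.exp (-(N * μ ^ 2) / (2 * M ^ 2)) + 2 ^ k / (N * μ) ^ k :=
  negative_moment_upper_bound_general P M μ c hμ hc k N hN X hXmeas hindep hXrange hXmean
end

section
/- Let M > 0, μ ∈ (0, M], c ≥ 1, and let k be a positive integer. Then there exist constants C_1, C_2 > 0, depending only on μ, M, c and k, such that for every positive integer N and every collection X_1, ..., X_N of independent random variables, each taking values in [0, M] almost surely and each satisfying E[X_j] ≥ μ, one has C_1 / N^k ≤ E[(Σ_{j=1}^N X_j + c)^{−k}] ≤ C_2 / N^k. -/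
open MeasureTheory ProbabilityTheory Real
open scoped Nat

/-! Write `S = ∑ j, X j`. Since `S + c ≤ N (M + c)`, the lower bound is immediate. For the upper
bound, split on the event `S ≤ N μ / 2`: off it the integrand is at most `(2 / (μ N))^k`; on it the
integrand is at most `1` (as `c ≥ 1`), and by Hoeffding's inequality the event has probability at
most `exp (-N μ² / (2 M²))`, which is `O(N^{-k})`. -/

lemma exp_neg_le_factorial_div_pow {y : ℝ} (hy : 0 < y) (k : ℕ) : exp (-y) ≤ k ! / y ^ k := by
  rw [exp_neg, le_div_iff₀ (pow_pos hy k), inv_mul_le_iff₀ (exp_pos y)]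
  exact (div_le_iff₀ (by positivity)).1 (pow_div_factorial_le_exp y hy.le k)

lemma inv_add_pow_mem_Icc {s c : ℝ} (hs : 0 ≤ s) (hc : 1 ≤ c) (k : ℕ) :
    ((s + c) ^ k)⁻¹ ∈ Set.Icc (0 : ℝ) 1 :=
  ⟨by positivity, inv_le_one_of_one_le₀ (one_le_pow₀ (by linarith))⟩

section

variable {Ω ι : Type*} [MeasurableSpace Ω] {P : Measure Ω} [IsProbabilityMeasure P]

lemma integral_le_measureReal_add {f : Ω → ℝ} {A : Set Ω} {b : ℝ} (hA : MeasurableSet A)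
    (hf : Integrable f P) (hb : 0 ≤ b) (hf_le_one : ∀ᵐ ω ∂P, f ω ≤ 1)
    (hf_compl : ∀ᵐ ω ∂P, ω ∉ A → f ω ≤ b) :
    ∫ ω, f ω ∂P ≤ P.real A + b := by
  have hind : Integrable (A.indicator (1 : Ω → ℝ)) P := (integrable_const 1).indicator hA
  calc ∫ ω, f ω ∂P ≤ ∫ ω, (A.indicator (1 : Ω → ℝ) ω + b) ∂P := by
        refine integral_mono_ae hf (hind.add (integrable_const b) :) ?_
        filter_upwards [hf_le_one, hf_compl] with ω h_one h_compl
        by_cases hω : ω ∈ A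
        · simp only [Set.indicator_of_mem hω, Pi.one_apply]; linarith
        · simp only [Set.indicator_of_notMem hω, zero_add, h_compl hω]
    _ = P.real A + b := by
        rw [integral_add hind (integrable_const b), integral_indicator_one hA, integral_const]
        simp

variable [Fintype ι] {X : ι → Ω → ℝ}

theorem measureReal_sum_le_sum_integral_sub_le (h_indep : iIndepFun X P)
    (hX : ∀ i, Measurable (X i)) {a b : ℝ} (h_mem : ∀ i, ∀ᵐ ω ∂P, X i ω ∈ Set.Icc a b)
    {t : ℝ} (ht : 0 ≤ t) :
    P.real {ω | ∑ i, X i ω ≤ ∑ i, P[X i] - t} ≤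
      exp (-2 * t ^ 2 / (Fintype.card ι * (b - a) ^ 2)) := by
  set Y : ι → Ω → ℝ := fun i ω ↦ P[X i] - X i ω
  have hY_indep : iIndepFun Y P :=
    h_indep.comp (fun i (x : ℝ) ↦ (∫ ω, X i ω ∂P) - x) fun _ ↦ measurable_const.sub measurable_id
  have hY : ∀ i ∈ Finset.univ, HasSubgaussianMGF (Y i) ((‖b - a‖₊ / 2) ^ 2) P := fun i _ ↦ by
    convert (hasSubgaussianMGF_of_mem_Icc (hX i).aemeasurable (h_mem i)).neg using 1
    ext ω; simp [Y]
  convert HasSubgaussianMGF.measure_sum_ge_le_of_iIndepFun hY_indep hY ht using 2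
  · ext ω
    simp only [Set.mem_ofPred_eq, Y, Finset.sum_sub_distrib]
    constructor <;> intro <;> linarith
  · simp only [Finset.sum_const, Finset.card_univ, nsmul_eq_mul, NNReal.coe_mul, NNReal.coe_pow,
      NNReal.coe_div, NNReal.coe_natCast, NNReal.coe_ofNat, coe_nnnorm, Real.norm_eq_abs, div_pow,
      sq_abs]
    generalize (b - a) ^ 2 = d
    ring

lemma integrable_inv_add_pow {S : Ω → ℝ} (hS : Measurable S) (hS_nonneg : ∀ᵐ ω ∂P, 0 ≤ S ω)
    {c : ℝ} (hc : 1 ≤ c) (k : ℕ) : Integrable (fun ω ↦ ((S ω + c) ^ k)⁻¹) P :=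
  .of_mem_Icc 0 1 (by fun_prop) (hS_nonneg.mono fun _ h ↦ inv_add_pow_mem_Icc h hc k)

variable {M μ c : ℝ}

theorem measureReal_sum_le_half_le_exp (h_indep : iIndepFun X P) (hX : ∀ i, Measurable (X i))
    (hM : 0 < M) (h_mem : ∀ i, ∀ᵐ ω ∂P, X i ω ∈ Set.Icc 0 M) (hμ : 0 ≤ μ)
    (h_mean : ∀ i, μ ≤ P[X i]) :
    P.real {ω | ∑ i, X i ω ≤ Fintype.card ι * μ / 2} ≤
      exp (-(Fintype.card ι * (μ ^ 2 / (2 * M ^ 2)))) := by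
  set n : ℝ := (Fintype.card ι : ℝ)
  have h_sum : n * μ ≤ ∑ i, P[X i] := by
    simpa [n] using Finset.sum_le_sum fun i (_ : i ∈ Finset.univ) ↦ h_mean i
  calc P.real {ω | ∑ i, X i ω ≤ n * μ / 2}
      ≤ P.real {ω | ∑ i, X i ω ≤ ∑ i, P[X i] - n * μ / 2} :=
        measureReal_mono fun ω (hω : ∑ i, X i ω ≤ n * μ / 2) ↦
          (by linarith : ∑ i, X i ω ≤ ∑ i, P[X i] - n * μ / 2)
    _ ≤ exp (-2 * (n * μ / 2) ^ 2 / (n * (M - 0) ^ 2)) :=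
        measureReal_sum_le_sum_integral_sub_le h_indep hX h_mem (by positivity)
    _ = exp (-(n * (μ ^ 2 / (2 * M ^ 2)))) := by
        rcases eq_or_ne n 0 with hn | hn
        · simp [hn]
        · have := hM.ne'
          congr 1; field_simp; ring

theorem integral_inv_sum_add_pow_le [Nonempty ι] (h_indep : iIndepFun X P)
    (hX : ∀ i, Measurable (X i)) (hM : 0 < M) (h_mem : ∀ i, ∀ᵐ ω ∂P, X i ω ∈ Set.Icc 0 M)
    (hμ : 0 < μ) (h_mean : ∀ i, μ ≤ P[X i]) (hc : 1 ≤ c) (k : ℕ) :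
    ∫ ω, ((∑ i, X i ω + c) ^ k)⁻¹ ∂P ≤
      (k ! / (μ ^ 2 / (2 * M ^ 2)) ^ k + (2 / μ) ^ k) / Fintype.card ι ^ k := by
  set n : ℝ := (Fintype.card ι : ℝ)
  set a : ℝ := μ ^ 2 / (2 * M ^ 2)
  have hn : 0 < n := by positivity
  have h_nonneg : ∀ᵐ ω ∂P, 0 ≤ ∑ i, X i ω := by
    filter_upwards [ae_all_iff.2 h_mem] with ω hω using Finset.sum_nonneg fun i _ ↦ (hω i).1
  have hS : Measurable fun ω ↦ ∑ i, X i ω := by fun_prop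
  have h_large : ∀ᵐ ω ∂P, ω ∉ {ω | ∑ i, X i ω ≤ n * μ / 2} →
      ((∑ i, X i ω + c) ^ k)⁻¹ ≤ ((n * μ / 2) ^ k)⁻¹ := by
    filter_upwards [h_nonneg] with ω hω h_notMem
    have : n * μ / 2 < ∑ i, X i ω := not_le.1 h_notMem
    exact inv_anti₀ (by positivity) (pow_le_pow_left₀ (by positivity) (by linarith) k)
  calc ∫ ω, ((∑ i, X i ω + c) ^ k)⁻¹ ∂P
      ≤ P.real {ω | ∑ i, X i ω ≤ n * μ / 2} + ((n * μ / 2) ^ k)⁻¹ :=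
        integral_le_measureReal_add (measurableSet_le hS measurable_const)
          (integrable_inv_add_pow hS h_nonneg hc k) (by positivity)
          (h_nonneg.mono fun _ h ↦ (inv_add_pow_mem_Icc h hc k).2) h_large
    _ ≤ k ! / (n * a) ^ k + ((n * μ / 2) ^ k)⁻¹ := by
        gcongr
        exact (measureReal_sum_le_half_le_exp h_indep hX hM h_mem hμ.le h_mean).trans
          (exp_neg_le_factorial_div_pow (by positivity) k)
    _ = (k ! / a ^ k + (2 / μ) ^ k) / n ^ k := by
        rw [add_div]
        congr 1
        · rw [mul_pow, div_div, mul_comm (n ^ k)]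
        · rw [← inv_pow, inv_div, ← div_pow, div_div, mul_comm n]

theorem inv_add_pow_div_le_integral_inv_sum_add_pow [Nonempty ι] (hX : ∀ i, Measurable (X i))
    (h_mem : ∀ i, ∀ᵐ ω ∂P, X i ω ∈ Set.Icc 0 M) (hc : 1 ≤ c) (k : ℕ) :
    ((M + c) ^ k)⁻¹ / Fintype.card ι ^ k ≤ ∫ ω, ((∑ i, X i ω + c) ^ k)⁻¹ ∂P := by
  set n : ℝ := (Fintype.card ι : ℝ)
  have hn : 1 ≤ n := Nat.one_le_cast.2 Fintype.card_pos
  have h_bounds : ∀ᵐ ω ∂P, 0 ≤ ∑ i, X i ω ∧ ∑ i, X i ω ≤ n * M := by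
    filter_upwards [ae_all_iff.2 h_mem] with ω hω
    refine ⟨Finset.sum_nonneg fun i _ ↦ (hω i).1, ?_⟩
    simpa [n] using Finset.sum_le_sum fun i (_ : i ∈ Finset.univ) ↦ (hω i).2
  calc ((M + c) ^ k)⁻¹ / n ^ k = ∫ _ω, ((n * (M + c)) ^ k)⁻¹ ∂P := by
        simp [mul_pow, div_eq_mul_inv, mul_comm]
    _ ≤ ∫ ω, ((∑ i, X i ω + c) ^ k)⁻¹ ∂P := by
        refine integral_mono_ae (integrable_const _)
          (integrable_inv_add_pow (by fun_prop) (h_bounds.mono fun _ h ↦ h.1) hc k) ?_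
        filter_upwards [h_bounds] with ω hω
        have : c ≤ n * c := le_mul_of_one_le_left (by linarith) hn
        exact inv_anti₀ (pow_pos (by linarith) k) (pow_le_pow_left₀ (by linarith) (by nlinarith) k)

end

theorem negative_moment_theta_bound_general
    (M μ c : ℝ) (hM : 0 < M) (hμ : 0 < μ) (hc : 1 ≤ c)
    (k : ℕ) :
    ∃ C₁ > (0 : ℝ), ∃ C₂ > (0 : ℝ),
      ∀ (N : ℕ), 0 < N →
      ∀ (Ω : Type) [MeasurableSpace Ω] (P : Measure Ω) [IsProbabilityMeasure P]
        (X : Fin N → Ω → ℝ),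
        (∀ j, Measurable (X j)) →
        iIndepFun X P →
        (∀ j, ∀ᵐ ω ∂P, X j ω ∈ Set.Icc 0 M) →
        (∀ j, μ ≤ ∫ ω, X j ω ∂P) →
        C₁ / (N : ℝ) ^ k ≤ ∫ ω, ((∑ j, X j ω + c) ^ k)⁻¹ ∂P ∧
        ∫ ω, ((∑ j, X j ω + c) ^ k)⁻¹ ∂P ≤ C₂ / (N : ℝ) ^ k := by
  refine ⟨((M + c) ^ k)⁻¹, inv_pos.2 (pow_pos (by linarith) k),
    k ! / (μ ^ 2 / (2 * M ^ 2)) ^ k + (2 / μ) ^ k, by positivity, ?_⟩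
  intro N hN Ω _ P _ X hX h_indep h_mem h_mean
  have : Nonempty (Fin N) := ⟨⟨0, hN⟩⟩
  have h_lower := inv_add_pow_div_le_integral_inv_sum_add_pow hX h_mem hc k
  have h_upper := integral_inv_sum_add_pow_le h_indep hX hM h_mem hμ h_mean hc k
  rw [Fintype.card_fin] at h_lower h_upper
  exact ⟨h_lower, h_upper⟩

/-- Chernoff-type moment bound, Θ(1/N^k) form: There exist constants
`C₁, C₂ > 0`, depending only on `μ, M, c, k`, such that for every `N` and every
collection of independent random variables `X_1, …, X_N` with values in `[0, M]` a.s.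
and means at least `μ`,
`C₁ / N^k ≤ E[(Σ_j X_j + c)^{-k}] ≤ C₂ / N^k`. -/
theorem negative_moment_theta_bound
    (M μ c : ℝ) (hM : 0 < M) (hμ : 0 < μ) (hμM : μ ≤ M) (hc : 1 ≤ c)
    (k : ℕ) (hk : 0 < k) :
    ∃ C₁ > (0 : ℝ), ∃ C₂ > (0 : ℝ),
      ∀ (N : ℕ), 0 < N →
      ∀ (Ω : Type) [MeasurableSpace Ω] (P : Measure Ω) [IsProbabilityMeasure P]
        (X : Fin N → Ω → ℝ),
        (∀ j, Measurable (X j)) →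
        iIndepFun X P →
        (∀ j, ∀ᵐ ω ∂P, X j ω ∈ Set.Icc 0 M) →
        (∀ j, μ ≤ ∫ ω, X j ω ∂P) →
        C₁ / (N : ℝ) ^ k ≤ ∫ ω, ((∑ j, X j ω + c) ^ k)⁻¹ ∂P ∧
        ∫ ω, ((∑ j, X j ω + c) ^ k)⁻¹ ∂P ≤ C₂ / (N : ℝ) ^ k :=
  negative_moment_theta_bound_general M μ c hM hμ hc k
end

section
/- Let g_max > 0 and let f : [0, g_max] → ℝ be strictly convex on [0, g_max], strictly increasing, continuous, with f(0) = 0 and finite left derivative at g_max. Let c_1, c_2 > 0. Then there exists a positive integer N_1, depending only on f, g_max, c_1 and c_2, such that for every integer N ≥ N_1 and every nonnegative random variable Z satisfying E[1/(1+Z)] ≥ c_1/N and E[1/(1+Z)²] ≤ c_2/N², the following holds for all g ∈ [0, g_max]: E[log(1 + f(g)/(1+Z))] ≤ (g/g_max) · E[log(1 + f(g_max)/(1+Z))]. -/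
/-!
Write `u = (1 + Z)⁻¹ ∈ (0, 1]` and `φ t = E[log (1 + t u)]`, so that the claim reads
`φ (f g) ≤ (g / g_max) φ (f g_max)`. Since `x - x² ≤ log (1 + x) ≤ x`, the function `φ` is linear
up to an error of relative size `E[u²] / E[u] = O(1/N)`: `φ t ≤ t E[u]`, and increments of `φ` over
`[a, b]` are at least `(b - a)(E[u] - b E[u²])`. On the other hand `f` lies below the broken line
through `(0, 0)`, `(g_max/2, m)`, `(g_max, b)`, with `m = f (g_max/2) < b/2` by strict convexity.
On `[0, g_max/2]` the first chord compares `f g` with `g / g_max` times `2m < b`; on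
`[g_max/2, g_max]` the second chord makes `b - f g` exceed `(1 - g/g_max) b` by the factor
`2(b - m)/b > 1`. Both fixed gaps beat the `O(1/N)` nonlinearity of `φ` once `N` is large.
-/

open MeasureTheory Set Real

lemma ConvexOn.sub_mul_le_of_le_of_le {s : Set ℝ} {f : ℝ → ℝ} (hf : ConvexOn ℝ s f)
    {x y z : ℝ} (hx : x ∈ s) (hz : z ∈ s) (hxy : x ≤ y) (hyz : y ≤ z) :
    (z - x) * f y ≤ (z - y) * f x + (y - x) * f z := by
  rcases hxy.eq_or_lt with rfl | hxy
  · simp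
  rcases hyz.eq_or_lt with rfl | hyz
  · simp
  exact hf.secant_mono_aux1 hx hz hxy hyz

lemma log_one_add_le_self {x : ℝ} (hx : -1 < x) : log (1 + x) ≤ x := by
  linarith [log_le_sub_one_of_pos (show 0 < 1 + x by linarith)]

lemma sub_mul_le_log_one_add_mul_sub_log {a b u : ℝ} (ha : 0 ≤ a) (hab : a ≤ b) (hu : 0 ≤ u) :
    (b - a) * (u - b * u ^ 2) ≤ log (1 + b * u) - log (1 + a * u) := by
  have hau : 0 < 1 + a * u := by positivity
  have hbu : 0 < 1 + b * u := by nlinarith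
  have hquot : 1 - (1 + a * u) / (1 + b * u) ≤ log (1 + b * u) - log (1 + a * u) := by
    rw [← log_div hbu.ne' hau.ne']
    simpa [inv_div] using one_sub_inv_le_log_of_pos (div_pos hbu hau)
  have hgap : (b - a) * (u - b * u ^ 2) ≤ 1 - (1 + a * u) / (1 + b * u) := by
    have hsplit : 1 - (1 + a * u) / (1 + b * u) - (b - a) * (u - b * u ^ 2)
        = (b - a) * u * (b * u) ^ 2 / (1 + b * u) := by
      rw [eq_div_iff hbu.ne', sub_mul, sub_mul, div_mul_cancel₀ _ hbu.ne']
      ring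
    have : 0 ≤ b - a := by linarith
    linarith [show 0 ≤ (b - a) * u * (b * u) ^ 2 / (1 + b * u) by positivity]
  linarith

lemma exists_nat_forall_mul_le_mul {A B c₁ : ℝ} (c₂ : ℝ) (hA : 0 ≤ A) (hB : 0 < B) (hc₁ : 0 < c₁) :
    ∃ N₁ : ℕ, 0 < N₁ ∧ ∀ N : ℕ, N₁ ≤ N → ∀ E₁ E₂ : ℝ,
      c₁ / N ≤ E₁ → E₂ ≤ c₂ / (N : ℝ) ^ 2 → A * E₂ ≤ B * E₁ := by
  refine ⟨⌈A * c₂ / (B * c₁)⌉₊ + 1, Nat.succ_pos _, fun N hN E₁ E₂ hE₁ hE₂ => ?_⟩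
  have hN0 : (0 : ℝ) < N := by exact_mod_cast (Nat.succ_pos _).trans_le hN
  have hNlarge : A * c₂ ≤ B * c₁ * N := by
    have : A * c₂ / (B * c₁) ≤ N :=
      (Nat.le_ceil _).trans (by exact_mod_cast (Nat.le_succ _).trans hN)
    rw [div_le_iff₀ (by positivity)] at this
    linarith
  calc A * E₂ ≤ A * (c₂ / N ^ 2) := mul_le_mul_of_nonneg_left hE₂ hA
    _ ≤ B * (c₁ / N) := by
      rw [mul_div_assoc', mul_div_assoc', div_le_div_iff₀ (by positivity) hN0]
      nlinarith
    _ ≤ B * E₁ := mul_le_mul_of_nonneg_left hE₁ hB.le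

theorem comp_le_div_mul_comp_of_margin {f φ : ℝ → ℝ} {gmax E₁ E₂ : ℝ} (hgmax : 0 < gmax)
    (hconv : ConvexOn ℝ (Icc 0 gmax) f) (hmono : MonotoneOn f (Icc 0 gmax)) (hf0 : f 0 = 0)
    (hφ0 : φ 0 = 0) (hφ_le : ∀ t, 0 ≤ t → φ t ≤ t * E₁)
    (hφ_sub : ∀ a b, 0 ≤ a → a ≤ b → (b - a) * (E₁ - b * E₂) ≤ φ b - φ a)
    (hE₁ : 0 ≤ E₁) (hE₂ : 0 ≤ E₂)
    (hmargin : 2 * (f gmax - f (gmax / 2)) * f gmax * E₂ ≤ (f gmax - 2 * f (gmax / 2)) * E₁)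
    {g : ℝ} (hg : g ∈ Icc 0 gmax) :
    φ (f g) ≤ g / gmax * φ (f gmax) := by
  have h0 : (0 : ℝ) ∈ Icc 0 gmax := ⟨le_rfl, hgmax.le⟩
  have hG : gmax ∈ Icc 0 gmax := ⟨hgmax.le, le_rfl⟩
  have hM : gmax / 2 ∈ Icc 0 gmax := ⟨by linarith, by linarith⟩
  set b := f gmax
  set m := f (gmax / 2)
  have ha0 : 0 ≤ f g := hf0 ▸ hmono h0 hg hg.1
  have hab : f g ≤ b := hmono hg hG hg.2
  have hb0 : 0 ≤ b := ha0.trans hab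
  have hm0 : 0 ≤ m := hf0 ▸ hmono h0 hM (by linarith)
  have h2m : 2 * m ≤ b := by
    have := hconv.sub_mul_le_of_le_of_le h0 hG (by linarith : 0 ≤ gmax / 2) (by linarith)
    rw [hf0] at this
    nlinarith
  have hquad : b * (b * E₂) ≤ (b - 2 * m) * E₁ := by
    nlinarith [mul_nonneg (mul_nonneg (sub_nonneg.2 h2m) hb0) hE₂]
  have hbE : b * E₂ ≤ E₁ := by
    rcases hb0.eq_or_lt with hb | hb
    · rw [← hb, zero_mul]
      exact hE₁
    · exact le_of_mul_le_mul_left (by nlinarith) hb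
  have hφb : b * (E₁ - b * E₂) ≤ φ b := by simpa [hφ0] using hφ_sub 0 b le_rfl hb0
  rcases le_total g (gmax / 2) with hleft | hright
  · have hchord : gmax * f g ≤ 2 * g * m := by
      have := hconv.sub_mul_le_of_le_of_le h0 hM hg.1 hleft
      rw [hf0] at this
      linarith
    have hslope : 2 * m * E₁ ≤ b * (E₁ - b * E₂) := by linarith
    calc φ (f g) ≤ f g * E₁ := hφ_le _ ha0
      _ ≤ g / gmax * (2 * m * E₁) := by
        rw [div_mul_eq_mul_div, le_div_iff₀ hgmax]
        nlinarith
      _ ≤ g / gmax * φ b := by gcongr; exacts [div_nonneg hg.1 hgmax.le, hslope.trans hφb]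
  · have hchord : 2 * (gmax - g) * (b - m) ≤ gmax * (b - f g) := by
      have := hconv.sub_mul_le_of_le_of_le hM hG hright hg.2
      linarith
    have hslope : b * E₁ ≤ 2 * (b - m) * (E₁ - b * E₂) := by nlinarith
    have hincr : (gmax - g) * φ b ≤ gmax * (φ b - φ (f g)) :=
      calc (gmax - g) * φ b ≤ (gmax - g) * (b * E₁) := by
            gcongr
            · linarith [hg.2]
            · exact hφ_le b hb0
        _ ≤ 2 * (gmax - g) * (b - m) * (E₁ - b * E₂) := by nlinarith [hg.2]
        _ ≤ gmax * ((b - f g) * (E₁ - b * E₂)) := by nlinarith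
        _ ≤ gmax * (φ b - φ (f g)) := by gcongr; exact hφ_sub _ _ ha0 hab
    rw [div_mul_eq_mul_div, le_div_iff₀ hgmax]
    linarith

section ExpectedLog

variable {Ω : Type*} [MeasurableSpace Ω] {P : Measure Ω} {U : Ω → ℝ}

lemma integrable_log_one_add_mul (hU : Integrable U P) (hU0 : ∀ᵐ ω ∂P, 0 ≤ U ω)
    {t : ℝ} (ht : 0 ≤ t) : Integrable (fun ω => log (1 + t * U ω)) P := by
  refine (hU.const_mul t).mono'
    (measurable_log.comp_aemeasurable (aemeasurable_const.add
      (hU.aemeasurable.const_mul t))).aestronglyMeasurable ?_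
  filter_upwards [hU0] with ω hω
  have htU : 0 ≤ t * U ω := mul_nonneg ht hω
  rw [norm_of_nonneg (log_nonneg (by linarith))]
  exact log_one_add_le_self (by linarith)

lemma integral_log_one_add_mul_le (hU : Integrable U P) (hU0 : ∀ᵐ ω ∂P, 0 ≤ U ω)
    {t : ℝ} (ht : 0 ≤ t) : ∫ ω, log (1 + t * U ω) ∂P ≤ t * ∫ ω, U ω ∂P := by
  rw [← integral_const_mul]
  refine integral_mono_ae (integrable_log_one_add_mul hU hU0 ht) (hU.const_mul t) ?_
  filter_upwards [hU0] with ω hω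
  exact log_one_add_le_self (by nlinarith)

lemma sub_mul_le_integral_log_one_add_mul_sub (hU : Integrable U P)
    (hU2 : Integrable (fun ω => U ω ^ 2) P) (hU0 : ∀ᵐ ω ∂P, 0 ≤ U ω)
    {a b : ℝ} (ha : 0 ≤ a) (hab : a ≤ b) :
    (b - a) * (∫ ω, U ω ∂P - b * ∫ ω, U ω ^ 2 ∂P)
      ≤ ∫ ω, log (1 + b * U ω) ∂P - ∫ ω, log (1 + a * U ω) ∂P := by
  rw [← integral_const_mul, ← integral_sub hU (hU2.const_mul b), ← integral_const_mul,
    ← integral_sub (integrable_log_one_add_mul hU hU0 (ha.trans hab))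
      (integrable_log_one_add_mul hU hU0 ha)]
  refine integral_mono_ae ((hU.sub (hU2.const_mul b)).const_mul _)
    ((integrable_log_one_add_mul hU hU0 (ha.trans hab)).sub
      (integrable_log_one_add_mul hU hU0 ha)) ?_
  filter_upwards [hU0] with ω hω
  exact sub_mul_le_log_one_add_mul_sub_log ha hab hω

lemma integrable_inv_one_add_pow [IsFiniteMeasure P] {Z : Ω → ℝ} (hZ : Measurable Z)
    (hZ0 : ∀ᵐ ω ∂P, 0 ≤ Z ω) (n : ℕ) : Integrable (fun ω => (1 + Z ω)⁻¹ ^ n) P := by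
  refine .of_bound ((measurable_const.add hZ).inv.pow_const n).aestronglyMeasurable 1 ?_
  filter_upwards [hZ0] with ω hω
  rw [norm_of_nonneg (by positivity)]
  exact pow_le_one₀ (by positivity) (inv_le_one_of_one_le₀ (by linarith))

end ExpectedLog

theorem dual_feasibility_below_threshold_general
    (gmax : ℝ) (hgmax : 0 < gmax) (f : ℝ → ℝ)
    (hconv : StrictConvexOn ℝ (Set.Icc 0 gmax) f)
    (hmono : StrictMonoOn f (Set.Icc 0 gmax))
    (hf0 : f 0 = 0)
    (c₁ c₂ : ℝ) (hc₁ : 0 < c₁) :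
    ∃ N₁ : ℕ, 0 < N₁ ∧
      ∀ N : ℕ, N₁ ≤ N →
      ∀ (Ω : Type) [MeasurableSpace Ω] (P : Measure Ω) [IsProbabilityMeasure P]
        (Z : Ω → ℝ), Measurable Z → (∀ᵐ ω ∂P, 0 ≤ Z ω) →
        c₁ / (N : ℝ) ≤ ∫ ω, (1 + Z ω)⁻¹ ∂P →
        ∫ ω, ((1 + Z ω) ^ 2)⁻¹ ∂P ≤ c₂ / (N : ℝ) ^ 2 →
        ∀ g ∈ Set.Icc 0 gmax,
          ∫ ω, Real.log (1 + f g / (1 + Z ω)) ∂P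
            ≤ (g / gmax) * ∫ ω, Real.log (1 + f gmax / (1 + Z ω)) ∂P := by
  have hgap : 2 * f (gmax / 2) < f gmax := by
    have := hconv.secant_strict_mono_aux1 (x := 0) (y := gmax / 2) (z := gmax)
      ⟨le_rfl, hgmax.le⟩ ⟨hgmax.le, le_rfl⟩ (by linarith) (by linarith)
    rw [hf0] at this
    nlinarith
  have hm0 : 0 ≤ f (gmax / 2) :=
    hf0 ▸ hmono.monotoneOn ⟨le_rfl, hgmax.le⟩ ⟨by linarith, by linarith⟩ (by linarith)
  obtain ⟨N₁, hN₁, hmargin⟩ := exists_nat_forall_mul_le_mul c₂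
    (A := 2 * (f gmax - f (gmax / 2)) * f gmax) (by nlinarith) (sub_pos.2 hgap) hc₁
  refine ⟨N₁, hN₁, fun N hN Ω _ P _ Z hZ hZ0 hE₁ hE₂ g hg => ?_⟩
  have hU := integrable_inv_one_add_pow (P := P) hZ hZ0 1
  have hU2 := integrable_inv_one_add_pow (P := P) hZ hZ0 2
  have hU0 : ∀ᵐ ω ∂P, 0 ≤ (1 + Z ω)⁻¹ := by
    filter_upwards [hZ0] with ω hω
    positivity
  simp only [pow_one] at hU
  simp_rw [← inv_pow] at hE₂
  simp_rw [div_eq_mul_inv]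
  exact comp_le_div_mul_comp_of_margin hgmax hconv.convexOn hmono.monotoneOn hf0 (by simp)
    (fun t ht => integral_log_one_add_mul_le hU hU0 ht)
    (fun a b ha hab => sub_mul_le_integral_log_one_add_mul_sub hU hU2 hU0 ha hab)
    ((div_nonneg hc₁.le (Nat.cast_nonneg N)).trans hE₁) (integral_nonneg fun ω => by positivity)
    (hmargin N hN _ _ hE₁ hE₂) hg

/-- first family of dual feasibility conditions at large `N`: For
`f : [0, g_max] → ℝ` strictly convex, strictly increasing, continuous, `f 0 = 0`,
with finite left derivative `L` at `g_max`, and constants `c₁, c₂ > 0`, there is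
`N₁` (depending only on `f, g_max, c₁, c₂`) such that for all `N ≥ N₁` and every
nonnegative random variable `Z` with `E[(1+Z)⁻¹] ≥ c₁/N` and `E[(1+Z)⁻²] ≤ c₂/N²`,
for all `g ∈ [0, g_max]`:
`E[log(1 + f g / (1+Z))] ≤ (g/g_max) E[log(1 + f g_max / (1+Z))]`. -/
theorem dual_feasibility_below_threshold
    (gmax : ℝ) (hgmax : 0 < gmax) (f : ℝ → ℝ) (L : ℝ)
    (hconv : StrictConvexOn ℝ (Set.Icc 0 gmax) f)
    (hmono : StrictMonoOn f (Set.Icc 0 gmax))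
    (hcont : ContinuousOn f (Set.Icc 0 gmax))
    (hf0 : f 0 = 0)
    (hL : Filter.Tendsto (fun g => (f gmax - f g) / (gmax - g))
      (nhdsWithin gmax (Set.Iio gmax)) (nhds L))
    (c₁ c₂ : ℝ) (hc₁ : 0 < c₁) (hc₂ : 0 < c₂) :
    ∃ N₁ : ℕ, 0 < N₁ ∧
      ∀ N : ℕ, N₁ ≤ N →
      ∀ (Ω : Type) [MeasurableSpace Ω] (P : Measure Ω) [IsProbabilityMeasure P]
        (Z : Ω → ℝ), Measurable Z → (∀ᵐ ω ∂P, 0 ≤ Z ω) →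
        c₁ / (N : ℝ) ≤ ∫ ω, (1 + Z ω)⁻¹ ∂P →
        ∫ ω, ((1 + Z ω) ^ 2)⁻¹ ∂P ≤ c₂ / (N : ℝ) ^ 2 →
        ∀ g ∈ Set.Icc 0 gmax,
          ∫ ω, Real.log (1 + f g / (1 + Z ω)) ∂P
            ≤ (g / gmax) * ∫ ω, Real.log (1 + f gmax / (1 + Z ω)) ∂P :=
  dual_feasibility_below_threshold_general gmax hgmax f hconv hmono hf0 c₁ c₂ hc₁
end
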